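/- Let f be a submodular set function on a finite ground set with f(∅) = 0, let V be a finite set, and let 0 ≤ k ≤ |V|. If S is a uniformly random subset of V of size k, then 𝔼[f(S)] ≥ (k/|V|)·f(V). -/

import Mathlib

/-!
For `T ⊆ V`, adding the elements of `V \ T` to `T` one at a time and using submodularity gives
`f V - f T ≤ ∑ x ∈ V \ T, (f (T ∪ {x}) - f T)`. Summing this over the `j`-subsets `T` of `V` and
counting each `(j+1)`-subset `T ∪ {x}` once for each of its `j + 1` elements gives, with `n = |V|`
and `F j` the sum of `f` over the `j`-subsets of `V`,
`C(n, j) f V + (n - j - 1) F j ≤ (j + 1) F (j + 1)`. Induction on `j`, starting from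
`F 0 = f ∅ = 0`, then yields `n F k ≥ k C(n, k) f V`.
-/

open Finset

section

variable {α β : Type*} [DecidableEq α]

def IsSubmodular [Sub β] [LE β] (f : Finset α → β) : Prop :=
  ∀ X Y : Finset α, X ⊆ Y → ∀ x, x ∉ Y → f (insert x Y) - f Y ≤ f (insert x X) - f X

theorem IsSubmodular.sub_le_sum_insert_sub [AddCommGroup β] [PartialOrder β]
    [IsOrderedAddMonoid β] {f : Finset α → β} (hf : IsSubmodular f) {T D : Finset α}
    (hTD : Disjoint T D) :
    f (T ∪ D) - f T ≤ ∑ x ∈ D, (f (insert x T) - f T) := by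
  induction D using Finset.induction_on with
  | empty => simp
  | insert a D ha ih =>
    rw [disjoint_insert_right] at hTD
    rw [sum_insert ha, union_insert]
    calc f (insert a (T ∪ D)) - f T
        = (f (insert a (T ∪ D)) - f (T ∪ D)) + (f (T ∪ D) - f T) := by abel
      _ ≤ (f (insert a T) - f T) + ∑ x ∈ D, (f (insert x T) - f T) :=
        add_le_add (hf T (T ∪ D) subset_union_left a (by simp [hTD.1, ha])) (ih hTD.2)

theorem sum_powersetCard_sum_sdiff_insert [AddCommMonoid β] (g : Finset α → β)
    (V : Finset α) (j : ℕ) :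
    ∑ T ∈ powersetCard j V, ∑ x ∈ V \ T, g (insert x T)
      = (j + 1) • ∑ S ∈ powersetCard (j + 1) V, g S := by
  have hcount : ∀ S ∈ powersetCard (j + 1) V, (j + 1) • g S = ∑ _x ∈ S, g S := by
    intro S hS
    rw [sum_const, (mem_powersetCard.mp hS).2]
  rw [smul_sum, sum_congr rfl hcount, sum_sigma', sum_sigma']
  refine sum_nbij' (fun p => ⟨insert p.2 p.1, p.2⟩) (fun q => ⟨q.1.erase q.2, q.2⟩)
    ?_ ?_ ?_ ?_ (fun _ _ => rfl)
  · rintro ⟨T, x⟩ hTx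
    simp only [mem_sigma, mem_powersetCard, mem_sdiff] at hTx ⊢
    exact ⟨⟨insert_subset hTx.2.1 hTx.1.1, by rw [card_insert_of_notMem hTx.2.2, hTx.1.2]⟩,
      mem_insert_self x T⟩
  · rintro ⟨S, x⟩ hSx
    simp only [mem_sigma, mem_powersetCard, mem_sdiff] at hSx ⊢
    exact ⟨⟨(erase_subset x S).trans hSx.1.1, by rw [card_erase_of_mem hSx.2, hSx.1.2]; rfl⟩,
      hSx.1.1 hSx.2, notMem_erase x S⟩
  · rintro ⟨T, x⟩ hTx
    simp only [mem_sigma, mem_sdiff] at hTx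
    simp [erase_insert hTx.2.2]
  · rintro ⟨S, x⟩ hSx
    simp only [mem_sigma] at hSx
    simp [insert_erase hSx.2]

variable {R : Type*} [CommRing R] [LinearOrder R] [IsStrictOrderedRing R]

theorem IsSubmodular.choose_mul_add_le {f : Finset α → R} (hf : IsSubmodular f)
    {V : Finset α} {j : ℕ} (hj : j < #V) :
    (#V).choose j * f V + (#V - j - 1 : R) * ∑ T ∈ powersetCard j V, f T
      ≤ (j + 1) * ∑ S ∈ powersetCard (j + 1) V, f S := by
  have hT : ∀ T ∈ powersetCard j V,
      f V + (#V - j - 1 : R) * f T ≤ ∑ x ∈ V \ T, f (insert x T) := by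
    intro T hT
    obtain ⟨hTV, hTcard⟩ := mem_powersetCard.mp hT
    have hmarg := hf.sub_le_sum_insert_sub (disjoint_sdiff (s := T) (t := V))
    have hcard : ((#(V \ T) : ℕ) : R) = #V - j := by
      rw [card_sdiff_of_subset hTV, hTcard, Nat.cast_sub hj.le]
    rw [union_sdiff_of_subset hTV, sum_sub_distrib, sum_const, nsmul_eq_mul, hcard] at hmarg
    linarith
  calc (#V).choose j * f V + (#V - j - 1 : R) * ∑ T ∈ powersetCard j V, f T
      = ∑ T ∈ powersetCard j V, (f V + (#V - j - 1 : R) * f T) := by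
        rw [sum_add_distrib, sum_const, card_powersetCard, nsmul_eq_mul, mul_sum]
    _ ≤ ∑ T ∈ powersetCard j V, ∑ x ∈ V \ T, f (insert x T) := sum_le_sum hT
    _ = (j + 1) * ∑ S ∈ powersetCard (j + 1) V, f S := by
        rw [sum_powersetCard_sum_sdiff_insert, nsmul_eq_mul, Nat.cast_succ]

theorem IsSubmodular.mul_choose_mul_le_card_mul_sum {f : Finset α → R} (hf : IsSubmodular f)
    (hempty : f ∅ = 0) {V : Finset α} {k : ℕ} (hk : k ≤ #V) :
    k * (#V).choose k * f V ≤ #V * ∑ S ∈ powersetCard k V, f S := by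
  induction k with
  | zero => simp [hempty]
  | succ j ih =>
    set n := #V
    have hjn : j < n := hk
    have hgap : (0 : R) ≤ n - j - 1 := by
      have : (j : R) + 1 ≤ n := by exact_mod_cast hjn
      linarith
    have hchoose : ((n.choose (j + 1) : ℕ) : R) * (j + 1) = n.choose j * (n - j) := by
      have h := congrArg (Nat.cast : ℕ → R) (Nat.choose_succ_right_eq n j)
      push_cast [Nat.cast_sub hjn.le] at h
      exact h
    have hstep := hf.choose_mul_add_le hjn
    refine le_of_mul_le_mul_left ?_ (by positivity : (0 : R) < j + 1)
    push_cast
    calc (j + 1 : R) * ((j + 1) * (n.choose (j + 1) : ℕ) * f V)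
        = n * (n.choose j * f V) + (n - j - 1) * (j * n.choose j * f V) := by
          linear_combination (j + 1 : R) * f V * hchoose
      _ ≤ n * (n.choose j * f V) + (n - j - 1) * (n * ∑ S ∈ powersetCard j V, f S) := by
          gcongr n * _ + _ * ?_
          exact ih hjn.le
      _ = n * (n.choose j * f V + (n - j - 1) * ∑ S ∈ powersetCard j V, f S) := by ring
      _ ≤ n * ((j + 1) * ∑ S ∈ powersetCard (j + 1) V, f S) := by gcongr
      _ = (j + 1) * (n * ∑ S ∈ powersetCard (j + 1) V, f S) := by ring

end

theorem stmt_18_general {α : Type*} [DecidableEq α]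
    (f : Finset α → ℝ)
    (hsub : ∀ X Y : Finset α, X ⊆ Y → ∀ x, x ∉ Y →
      f (insert x Y) - f Y ≤ f (insert x X) - f X)
    (hempty : f ∅ = 0)
    (V : Finset α) (k : ℕ) (hk : k ≤ V.card) :
    (∑ S ∈ Finset.powersetCard k V, f S) / ((Finset.powersetCard k V).card : ℝ)
      ≥ ((k : ℝ) / (V.card : ℝ)) * f V := by
  rcases Nat.eq_zero_or_pos k with rfl | hkpos
  · simp [hempty]
  have hn : (0 : ℝ) < #V := by exact_mod_cast hkpos.trans_le hk
  have hchoose : (0 : ℝ) < (#V).choose k := by exact_mod_cast Nat.choose_pos hk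
  rw [card_powersetCard, ge_iff_le, div_mul_eq_mul_div, div_le_div_iff₀ hn hchoose]
  linarith [IsSubmodular.mul_choose_mul_le_card_mul_sum hsub hempty hk]

/-- for submodular `f` with `f(∅) = 0`, a finite set `V`, and `0 ≤ k ≤ |V|`,
a uniformly random `k`-element subset `S` of `V` satisfies `𝔼[f(S)] ≥ (k/|V|)·f(V)`. -/
theorem stmt_18 {α : Type*} [DecidableEq α] [Fintype α]
    (f : Finset α → ℝ)
    (hsub : ∀ X Y : Finset α, X ⊆ Y → ∀ x, x ∉ Y →
      f (insert x Y) - f Y ≤ f (insert x X) - f X)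
    (hempty : f ∅ = 0)
    (V : Finset α) (k : ℕ) (hk : k ≤ V.card) :
    (∑ S ∈ Finset.powersetCard k V, f S) / ((Finset.powersetCard k V).card : ℝ)
      ≥ ((k : ℝ) / (V.card : ℝ)) * f V :=
  stmt_18_general f hsub hempty V k hk
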